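/- For all real η and r ≥ 0, (1/(2√π)) ∫_{-∞}^{η} e^{-t²} erfc(r t) dt = 1/4 + (1/4)·erf(η) + T(√2·η, r). -/

import Mathlib

open MeasureTheory intervalIntegral

/-- The error function. -/
noncomputable def erf (z : ℝ) : ℝ :=
  (2 / Real.sqrt Real.pi) * ∫ t in (0 : ℝ)..z, Real.exp (-t ^ 2)

/-- The complementary error function. -/
noncomputable def erfc (z : ℝ) : ℝ := 1 - erf z

/-- Owen's T function. -/
noncomputable def owenT (h r : ℝ) : ℝ :=
  (1 / (2 * Real.pi)) * ∫ u in (0 : ℝ)..r,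
    Real.exp (-h ^ 2 * (1 + u ^ 2) / 2) / (1 + u ^ 2)

/-!
Substituting `s = t u` gives `erf (r t) = (2/√π) ∫₀ʳ t e^{-t² u²} du`, so the `erf` part of the
left-hand side is a double integral of `t e^{-(1+u²) t²}`. After Fubini the integral over
`t ≤ η` is elementary, `-e^{-(1+u²) η²} / (2 (1+u²))`, which is the integrand of Owen's `T`.
Since `erf` and `T (h, ·)` are odd, it suffices to take `r ≥ 0`.
-/

open Real Set Filter Topology

lemma integrable_exp_neg_sq : Integrable fun t : ℝ ↦ exp (-t ^ 2) := by
  simpa using integrable_exp_neg_mul_sq one_pos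

lemma integral_Iic_exp_neg_sq (η : ℝ) :
    ∫ t in Iic η, exp (-t ^ 2) = √π / 2 + ∫ t in (0 : ℝ)..η, exp (-t ^ 2) := by
  have half : ∫ t in Iic (0 : ℝ), exp (-t ^ 2) = √π / 2 := by
    have := integral_comp_neg_Ioi 0 fun t : ℝ ↦ exp (-t ^ 2)
    simp only [neg_sq, neg_zero] at this
    simpa [← this] using integral_gaussian_Ioi 1
  rw [← half, ← integral_Iic_sub_Iic integrable_exp_neg_sq.integrableOn
    integrable_exp_neg_sq.integrableOn]
  ring

lemma tendsto_exp_neg_mul_sq_atBot {b : ℝ} (hb : 0 < b) :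
    Tendsto (fun t : ℝ ↦ exp (-b * t ^ 2)) atBot (𝓝 0) := by
  refine tendsto_exp_comp_nhds_zero.2 ?_
  have hsq : Tendsto (fun t : ℝ ↦ t ^ 2) atBot atTop := by
    simpa [Function.comp_def] using (tendsto_pow_atTop two_ne_zero).comp
      (tendsto_abs_atBot_atTop : Tendsto (fun t : ℝ ↦ |t|) atBot atTop)
  simpa [Function.comp_def] using tendsto_neg_atTop_atBot.comp (hsq.const_mul_atTop hb)

lemma integral_Iic_mul_exp_neg_mul_sq {b : ℝ} (hb : 0 < b) (η : ℝ) :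
    ∫ t in Iic η, t * exp (-b * t ^ 2) = -exp (-b * η ^ 2) / (2 * b) := by
  have hderiv (t : ℝ) :
      HasDerivAt (fun t ↦ -exp (-b * t ^ 2) / (2 * b)) (t * exp (-b * t ^ 2)) t := by
    have := (((hasDerivAt_pow 2 t).const_mul (-b)).exp.neg).div_const (2 * b)
    refine this.congr_deriv ?_
    field_simp
    norm_num
    ring
  have hlim : Tendsto (fun t ↦ -exp (-b * t ^ 2) / (2 * b)) atBot (𝓝 0) := by
    simpa using ((tendsto_exp_neg_mul_sq_atBot hb).neg).div_const (2 * b)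
  rw [integral_Iic_of_hasDerivAt_of_tendsto (hderiv η).continuousAt.continuousWithinAt
    (fun t _ ↦ hderiv t) (integrable_mul_exp_neg_mul_sq hb).integrableOn hlim, sub_zero]

lemma integral_zero_neg_of_even {f : ℝ → ℝ} (hf : f.Even) (b : ℝ) :
    ∫ x in (0 : ℝ)..-b, f x = -∫ x in (0 : ℝ)..b, f x := by
  have hreflect := integral_comp_neg (a := 0) (b := b) f
  simp only [hf _, neg_zero] at hreflect
  rw [hreflect, integral_symm]

lemma erf_neg (z : ℝ) : erf (-z) = -erf z := by
  rw [erf, erf, integral_zero_neg_of_even (f := fun t ↦ exp (-t ^ 2)) (fun t ↦ by simp)]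
  ring

lemma continuous_erf : Continuous erf :=
  continuous_const.mul <| continuous_primitive
    (fun _ _ ↦ (continuous_exp.comp (continuous_pow 2).neg).intervalIntegrable _ _) 0

lemma abs_erf_le (z : ℝ) : |erf z| ≤ 2 / √π * |z| := by
  have hbound : ‖∫ t in (0 : ℝ)..z, exp (-t ^ 2)‖ ≤ 1 * |z - 0| :=
    intervalIntegral.norm_integral_le_of_norm_le_const (f := fun t ↦ exp (-t ^ 2)) fun t _ ↦ by
      rw [norm_of_nonneg (exp_nonneg _), exp_le_one_iff, neg_nonpos]
      exact sq_nonneg t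
  rw [erf, abs_mul, abs_of_nonneg (by positivity : (0 : ℝ) ≤ 2 / √π)]
  exact mul_le_mul_of_nonneg_left (by simpa using hbound) (by positivity)

lemma integrable_exp_neg_sq_mul_erf_mul (r : ℝ) :
    Integrable fun t : ℝ ↦ exp (-t ^ 2) * erf (r * t) := by
  refine Integrable.mono' (((integrable_mul_exp_neg_mul_sq one_pos).norm).const_mul
    (2 / √π * |r|)) ?_ (Eventually.of_forall fun t ↦ ?_)
  · exact ((continuous_exp.comp (continuous_pow 2).neg).mul
      (continuous_erf.comp (continuous_const_mul r))).aestronglyMeasurable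
  · calc ‖exp (-t ^ 2) * erf (r * t)‖ ≤ exp (-t ^ 2) * (2 / √π * |r * t|) := by
          rw [norm_mul, norm_of_nonneg (exp_nonneg _)]
          exact mul_le_mul_of_nonneg_left (abs_erf_le _) (exp_nonneg _)
      _ = 2 / √π * |r| * ‖t * exp (-1 * t ^ 2)‖ := by
          rw [norm_mul, norm_of_nonneg (exp_nonneg _), abs_mul, Real.norm_eq_abs]
          ring_nf

lemma exp_neg_sq_mul_erf_mul (r t : ℝ) :
    exp (-t ^ 2) * erf (r * t)
      = 2 / √π * ∫ u in (0 : ℝ)..r, t * exp (-(1 + u ^ 2) * t ^ 2) := by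
  have hsubst :
      ∫ s in (0 : ℝ)..r * t, exp (-s ^ 2) = t * ∫ u in (0 : ℝ)..r, exp (-(t * u) ^ 2) := by
    rw [mul_integral_comp_mul_left (f := fun s ↦ exp (-s ^ 2)), mul_zero, mul_comm t r]
  rw [erf, hsubst]
  simp only [← intervalIntegral.integral_const_mul]
  refine intervalIntegral.integral_congr fun u _ ↦ ?_
  rw [show -(1 + u ^ 2) * t ^ 2 = -t ^ 2 + -(t * u) ^ 2 by ring, exp_add]
  ring

lemma integral_Iic_integral_Ioc_swap (η a b : ℝ) :
    ∫ t in Iic η, ∫ u in Ioc a b, t * exp (-(1 + u ^ 2) * t ^ 2)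
      = ∫ u in Ioc a b, ∫ t in Iic η, t * exp (-(1 + u ^ 2) * t ^ 2) := by
  refine integral_integral_swap <| Integrable.mono'
    ((integrable_mul_exp_neg_mul_sq one_pos).norm.integrableOn.mul_prod
      (integrableOn_const (C := (1 : ℝ)) measure_Ioc_lt_top.ne)) (by fun_prop)
    (Eventually.of_forall fun ⟨t, u⟩ ↦ ?_)
  simp only [Function.uncurry_apply_pair, norm_mul, norm_of_nonneg (exp_nonneg _), mul_one]
  gcongr
  nlinarith [sq_nonneg (t * u)]

lemma owenT_sqrt_two_mul (η r : ℝ) :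
    owenT (√2 * η) r
      = 1 / (2 * π) * ∫ u in (0 : ℝ)..r, exp (-(1 + u ^ 2) * η ^ 2) / (1 + u ^ 2) := by
  simp only [owenT, mul_pow, sq_sqrt zero_le_two]
  congr 1
  refine intervalIntegral.integral_congr fun u _ ↦ ?_
  ring_nf

lemma integral_Iic_exp_neg_sq_mul_erf_mul (η r : ℝ) :
    ∫ t in Iic η, exp (-t ^ 2) * erf (r * t)
      = -(1 / √π) * ∫ u in (0 : ℝ)..r, exp (-(1 + u ^ 2) * η ^ 2) / (1 + u ^ 2) := by
  wlog hr : 0 ≤ r generalizing r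
  · have hneg := this (-r) (by linarith)
    rw [integral_zero_neg_of_even (fun u ↦ by simp)] at hneg
    simp only [neg_mul r, erf_neg, mul_neg, MeasureTheory.integral_neg] at hneg
    linarith
  calc ∫ t in Iic η, exp (-t ^ 2) * erf (r * t)
      = 2 / √π * ∫ t in Iic η, ∫ u in Ioc 0 r, t * exp (-(1 + u ^ 2) * t ^ 2) := by
        simp only [exp_neg_sq_mul_erf_mul, intervalIntegral.integral_of_le hr,
          MeasureTheory.integral_const_mul]
    _ = 2 / √π * ∫ u in Ioc 0 r, ∫ t in Iic η, t * exp (-(1 + u ^ 2) * t ^ 2) := by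
        rw [integral_Iic_integral_Ioc_swap]
    _ = 2 / √π * ∫ u in Ioc 0 r, -(1 / 2) * (exp (-(1 + u ^ 2) * η ^ 2) / (1 + u ^ 2)) := by
        congr 1
        refine setIntegral_congr_fun measurableSet_Ioc fun u _ ↦ ?_
        rw [integral_Iic_mul_exp_neg_mul_sq (by positivity)]
        field_simp
    _ = _ := by
        rw [MeasureTheory.integral_const_mul, intervalIntegral.integral_of_le hr]
        ring

theorem bivariate_cdf_identity_general (η r : ℝ) :
    (1 / (2 * Real.sqrt Real.pi)) * ∫ t in Set.Iic η, Real.exp (-t ^ 2) * erfc (r * t)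
      = 1 / 4 + (1 / 4) * erf η + owenT (Real.sqrt 2 * η) r := by
  have hsplit : ∫ t in Iic η, exp (-t ^ 2) * erfc (r * t)
      = (∫ t in Iic η, exp (-t ^ 2)) - ∫ t in Iic η, exp (-t ^ 2) * erf (r * t) := by
    simp only [erfc, mul_sub, mul_one]
    exact integral_sub integrable_exp_neg_sq.integrableOn
      (integrable_exp_neg_sq_mul_erf_mul r).integrableOn
  rw [hsplit, integral_Iic_exp_neg_sq, integral_Iic_exp_neg_sq_mul_erf_mul, owenT_sqrt_two_mul,
    erf]
  set J := ∫ u in (0 : ℝ)..r, exp (-(1 + u ^ 2) * η ^ 2) / (1 + u ^ 2)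
  have hπ : √π ^ 2 = π := sq_sqrt pi_pos.le
  field_simp
  linear_combination (-8 * J) * hπ

theorem bivariate_cdf_identity (η r : ℝ) (hr : 0 ≤ r) :
    (1 / (2 * Real.sqrt Real.pi)) * ∫ t in Set.Iic η, Real.exp (-t ^ 2) * erfc (r * t)
      = 1 / 4 + (1 / 4) * erf η + owenT (Real.sqrt 2 * η) r :=
  bivariate_cdf_identity_general η r
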